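/- arXiv:1612.03451 — 4 statements merged into one kernel-verified Lean document; each statement's English description precedes it below -/
import Mathlib

section
/- Conditional Edge Lemma 1: Let (Λ,Ω) be a linear SEM over a finite vertex set V with implied covariance matrix Σ = (I−Λ)⁻ᵀ Ω (I−Λ)⁻¹, let x,y ∈ V and W ⊆ V\{x,y} with Σ_{WW} invertible. Let C = Ω(I−Λ)⁻¹ (so C_{xv} is the covariance of the error term u_x with variable v), and define the partial error covariance σ(u_x,y|W) = C_{xy} − C_{xW}(Σ_{WW})⁻¹Σ_{Wy}. Then σ(x,y|W) = Σ_{p ∈ Pa(x)} Λ_{px}·σ(p,y|W) + σ(u_x,y|W), where Pa(x) = {p : Λ_{px} ≠ 0}. -/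
open scoped Classical Matrix

namespace SEMPaper

variable {V : Type}

/-- `v` is a descendant of `u` in the digraph of `Λ` (edge `i → j` iff `Λ i j ≠ 0`). -/
def descMat (Λ : Matrix V V ℝ) (u v : V) : Prop :=
  Relation.ReflTransGen (fun i j => Λ i j ≠ 0) u v

/-- `Λ` can be put in strictly lower triangular form by reordering `V` (acyclicity). -/
def AcyclicMat (Λ : Matrix V V ℝ) : Prop :=
  ∃ r : V → ℕ, Function.Injective r ∧ ∀ i j, Λ i j ≠ 0 → r i < r j

/-- The implied covariance matrix `Σ = (I − Λ)⁻ᵀ Ω (I − Λ)⁻¹` of a linear SEM. -/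
noncomputable def implCov [Fintype V] [DecidableEq V] (Λ Ω : Matrix V V ℝ) : Matrix V V ℝ :=
  ((1 - Λ)⁻¹)ᵀ * Ω * (1 - Λ)⁻¹

/-- The submatrix `Σ_{WW}`. -/
noncomputable def subCov [Fintype V] [DecidableEq V] (S : Matrix V V ℝ) (W : Finset V) :
    Matrix W W ℝ :=
  Matrix.of fun a b : W => S a.1 b.1

/-- The partial covariance `σ(x,y|W) = Σ_{xy} − Σ_{xW} (Σ_{WW})⁻¹ Σ_{Wy}`. -/
noncomputable def partialCov [Fintype V] [DecidableEq V]
    (S : Matrix V V ℝ) (x y : V) (W : Finset V) : ℝ :=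
  S x y - ∑ i : W, ∑ j : W, S x i.1 * (subCov S W)⁻¹ i j * S j.1 y

/-- The partial error covariance `σ(u_x,y|W) = C_{xy} − C_{xW} (Σ_{WW})⁻¹ Σ_{Wy}` with
`C = Ω (I − Λ)⁻¹`. -/
noncomputable def partialErrCov [Fintype V] [DecidableEq V]
    (Λ Ω : Matrix V V ℝ) (x y : V) (W : Finset V) : ℝ :=
  (Ω * (1 - Λ)⁻¹) x y -
    ∑ i : W, ∑ j : W,
      (Ω * (1 - Λ)⁻¹) x i.1 * (subCov (implCov Λ Ω) W)⁻¹ i j * implCov Λ Ω j.1 y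


lemma pow_entry_rank {Λ : Matrix V V ℝ} [Fintype V] [DecidableEq V]
    {r : V → ℕ} (hr : ∀ i j, Λ i j ≠ 0 → r i < r j) :
    ∀ k i j, (Λ ^ k) i j ≠ 0 → r i + k ≤ r j := by
  intro k
  induction k with
  | zero =>
    intro i j h
    simp only [pow_zero, Matrix.one_apply, ne_eq, ite_eq_right_iff, not_forall] at h
    obtain ⟨rfl, -⟩ := h; simp
  | succ k ih =>
    intro i j h
    rw [pow_succ, Matrix.mul_apply] at h
    obtain ⟨m, hm⟩ := Finset.exists_ne_zero_of_sum_ne_zero h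
    have h1 : (Λ ^ k) i m ≠ 0 := fun hz => hm.2 (by rw [hz]; ring)
    have h2 : Λ m j ≠ 0 := fun hz => hm.2 (by rw [hz]; ring)
    have := ih i m h1
    have := hr m j h2
    omega

lemma acyclic_nilpotent {Λ : Matrix V V ℝ} [Fintype V] [DecidableEq V]
    (h : AcyclicMat Λ) : IsNilpotent Λ := by
  obtain ⟨r, -, hr⟩ := h
  refine ⟨Finset.univ.sup r + 1, ?_⟩
  ext i j
  by_contra hne
  have := pow_entry_rank hr _ i j hne
  have hi : r j ≤ Finset.univ.sup r := Finset.le_sup (Finset.mem_univ j)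
  omega

/-- **Conditional Edge Lemma 1.** In a linear SEM `(Λ, Ω)` with implied covariance `Σ`,
for `x, y ∈ V` and `W ⊆ V \ {x,y}` with `Σ_{WW}` invertible,
`σ(x,y|W) = ∑_{p ∈ Pa(x)} Λ_{px} σ(p,y|W) + σ(u_x,y|W)`. -/
theorem conditional_edge_lemma_one [Fintype V] [DecidableEq V]
    (Λ Ω : Matrix V V ℝ) (hacyc : AcyclicMat Λ) (hΩ : Ω.PosDef)
    (x y : V) (W : Finset V) (hxW : x ∉ W) (hyW : y ∉ W)
    (hWW : IsUnit (subCov (implCov Λ Ω) W)) :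
    partialCov (implCov Λ Ω) x y W =
      (∑ p ∈ Finset.univ.filter (fun p => Λ p x ≠ 0),
        Λ p x * partialCov (implCov Λ Ω) p y W)
      + partialErrCov Λ Ω x y W := by
  classical
  have hU : IsUnit (1 - Λ) := (acyclic_nilpotent hacyc).isUnit_one_sub
  have hdet : IsUnit (1 - Λ).det := (Matrix.isUnit_iff_isUnit_det _).mp hU
  -- key decomposition: Σ = Λᵀ Σ + Ω (1-Λ)⁻¹
  have hkey : implCov Λ Ω = Λᵀ * implCov Λ Ω + Ω * (1 - Λ)⁻¹ := by
    have h1 : (1 - Λ)ᵀ * implCov Λ Ω = Ω * (1 - Λ)⁻¹ := by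
      unfold implCov
      rw [← Matrix.mul_assoc, ← Matrix.mul_assoc, ← Matrix.transpose_mul,
        Matrix.nonsing_inv_mul _ hdet]
      simp
    have h2 : (1 - Λ)ᵀ * implCov Λ Ω = implCov Λ Ω - Λᵀ * implCov Λ Ω := by
      rw [Matrix.transpose_sub, Matrix.sub_mul]; simp
    rw [h2] at h1
    linear_combination (norm := abel) h1
  have hrow : ∀ v : V, implCov Λ Ω x v
      = (∑ p : V, Λ p x * implCov Λ Ω p v) + (Ω * (1 - Λ)⁻¹) x v := by
    intro v
    conv_lhs => rw [hkey]
    simp [Matrix.add_apply, Matrix.mul_apply, Matrix.transpose_apply]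
  have hfull : (∑ p ∈ Finset.univ.filter (fun p => Λ p x ≠ 0),
        Λ p x * partialCov (implCov Λ Ω) p y W)
      = ∑ p : V, Λ p x * partialCov (implCov Λ Ω) p y W := by
    rw [Finset.sum_filter_of_ne]
    intro p _ h hz
    exact h (by rw [hz]; ring)
  rw [hfull]
  unfold partialCov partialErrCov
  rw [hrow y]
  have hsum : ∀ i j : W,
      implCov Λ Ω x i.1 * (subCov (implCov Λ Ω) W)⁻¹ i j * implCov Λ Ω j.1 y
      = (∑ p : V, Λ p x * (implCov Λ Ω p i.1 * (subCov (implCov Λ Ω) W)⁻¹ i j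
          * implCov Λ Ω j.1 y))
        + (Ω * (1 - Λ)⁻¹) x i.1 * (subCov (implCov Λ Ω) W)⁻¹ i j
          * implCov Λ Ω j.1 y := by
    intro i j
    rw [hrow i.1, add_mul, add_mul, Finset.sum_mul, Finset.sum_mul]
    congr 1
    exact Finset.sum_congr rfl fun p _ => by ring
  simp only [hsum, Finset.sum_add_distrib]
  have hT : (∑ i : W, ∑ j : W, ∑ p : V,
      Λ p x * (implCov Λ Ω p i.1 * (subCov (implCov Λ Ω) W)⁻¹ i j * implCov Λ Ω j.1 y))
    = ∑ p : V, Λ p x * ∑ i : W, ∑ j : W,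
      implCov Λ Ω p i.1 * (subCov (implCov Λ Ω) W)⁻¹ i j * implCov Λ Ω j.1 y := by
    simp_rw [Finset.mul_sum]
    calc (∑ i : W, ∑ j : W, ∑ p : V,
        Λ p x * (implCov Λ Ω p i.1 * (subCov (implCov Λ Ω) W)⁻¹ i j * implCov Λ Ω j.1 y))
        = ∑ i : W, ∑ p : V, ∑ j : W,
        Λ p x * (implCov Λ Ω p i.1 * (subCov (implCov Λ Ω) W)⁻¹ i j * implCov Λ Ω j.1 y) :=
          Finset.sum_congr rfl fun i _ => Finset.sum_comm
      _ = _ := Finset.sum_comm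
  rw [hT]
  simp only [mul_sub]
  rw [Finset.sum_sub_distrib]
  ring

end SEMPaper
end

section
/- Conditional Edge Lemma 2: Let (Λ,Ω) be a linear SEM over V, let E be a set of directed edges (i.e., pairs (i,j) with Λ_{ij} ≠ 0), and let Λ' be Λ with the entries indexed by E set to zero. If none of the vertices in W ∪ {x,y} is a descendant in the digraph of Λ of any head of an edge in E, then the partial covariance σ(x,y|W) computed from Σ(Λ,Ω) = (I−Λ)⁻ᵀΩ(I−Λ)⁻¹ equals the partial covariance σ(x,y|W) computed from Σ(Λ',Ω) = (I−Λ')⁻ᵀΩ(I−Λ')⁻¹. -/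
open scoped Classical Matrix

namespace SEMPaper

variable {V : Type}

section Aux

variable [Fintype V] [DecidableEq V]

private lemma pow_rank_le {Λ : Matrix V V ℝ} {r : V → ℕ}
    (hr : ∀ i j, Λ i j ≠ 0 → r i < r j) :
    ∀ k u v, (Λ ^ k) u v ≠ 0 → r u + k ≤ r v := by
  intro k
  induction k with
  | zero =>
    intro u v h
    simp only [pow_zero] at h
    by_cases huv : u = v
    · subst huv; simp
    · exact absurd (Matrix.one_apply_ne huv) h
  | succ k ih =>
    intro u v h
    rw [pow_succ', Matrix.mul_apply] at h
    obtain ⟨w, _, hw⟩ := Finset.exists_ne_zero_of_sum_ne_zero h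
    have h1 : Λ u w ≠ 0 := fun h0 => hw (by simp [h0])
    have h2 : (Λ ^ k) w v ≠ 0 := fun h0 => hw (by simp [h0])
    have := ih w v h2
    have := hr u w h1
    omega

private lemma pow_eq_zero_of_acyclic {Λ : Matrix V V ℝ} {r : V → ℕ}
    (hr : ∀ i j, Λ i j ≠ 0 → r i < r j) :
    Λ ^ ((Finset.univ.sup r) + 1) = 0 := by
  ext u v
  by_contra h
  have := pow_rank_le hr _ u v h
  have hv : r v ≤ Finset.univ.sup r := Finset.le_sup (Finset.mem_univ v)
  omega

private lemma inv_one_sub_eq_geom {Λ : Matrix V V ℝ} {m : ℕ} (hm : Λ ^ m = 0) :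
    (1 - Λ)⁻¹ = ∑ k ∈ Finset.range m, Λ ^ k := by
  apply Matrix.inv_eq_left_inv
  have := geom_sum_mul (x := Λ) (n := m)
  have h2 : (∑ k ∈ Finset.range m, Λ ^ k) * (Λ - 1) = -1 := by
    rw [this, hm, zero_sub]
  have : (∑ k ∈ Finset.range m, Λ ^ k) * (1 - Λ) = 1 := by
    have : (1 : Matrix V V ℝ) - Λ = -(Λ - 1) := (neg_sub Λ 1).symm
    rw [this, mul_neg, h2, neg_neg]
  exact this

private lemma desc_of_pow_ne_zero {Λ : Matrix V V ℝ} :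
    ∀ k u v, (Λ ^ k) u v ≠ 0 → descMat Λ u v := by
  intro k
  induction k with
  | zero =>
    intro u v h
    simp only [pow_zero] at h
    by_cases huv : u = v
    · subst huv; exact Relation.ReflTransGen.refl
    · exact absurd (Matrix.one_apply_ne huv) h
  | succ k ih =>
    intro u v h
    rw [pow_succ', Matrix.mul_apply] at h
    obtain ⟨w, _, hw⟩ := Finset.exists_ne_zero_of_sum_ne_zero h
    have h1 : Λ u w ≠ 0 := fun h0 => hw (by simp [h0])
    have h2 : (Λ ^ k) w v ≠ 0 := fun h0 => hw (by simp [h0])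
    exact Relation.ReflTransGen.head h1 (ih w v h2)

end Aux

/-- **Conditional Edge Lemma 2.** Deleting a set `E` of directed edges whose heads have no
descendants in `W ∪ {x,y}` leaves the partial covariance `σ(x,y|W)` unchanged. -/
theorem conditional_edge_lemma_two [Fintype V] [DecidableEq V]
    (Λ Ω : Matrix V V ℝ) (hacyc : AcyclicMat Λ) (hΩ : Ω.PosDef)
    (E : Set (V × V)) (hE : ∀ e ∈ E, Λ e.1 e.2 ≠ 0)
    (Λ' : Matrix V V ℝ) (hΛ' : ∀ i j, Λ' i j = if (i, j) ∈ E then 0 else Λ i j)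
    (x y : V) (W : Finset V)
    (hdesc : ∀ e ∈ E, ∀ v : V, (v ∈ W ∨ v = x ∨ v = y) → ¬ descMat Λ e.2 v) :
    partialCov (implCov Λ Ω) x y W = partialCov (implCov Λ' Ω) x y W := by
  obtain ⟨r, _, hr⟩ := hacyc
  have hr' : ∀ i j, Λ' i j ≠ 0 → r i < r j := by
    intro i j h
    rw [hΛ'] at h
    by_cases hij : (i, j) ∈ E
    · simp [hij] at h
    · exact hr i j (by simpa [hij] using h)
  set m := (Finset.univ.sup r) + 1 with hm
  have hΛm : Λ ^ m = 0 := pow_eq_zero_of_acyclic hr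
  have hΛ'm : Λ' ^ m = 0 := pow_eq_zero_of_acyclic hr'
  -- a vertex is "clean" if no head of an edge in E reaches it
  set Clean : V → Prop := fun v => ∀ e ∈ E, ¬ descMat Λ e.2 v with hClean
  -- powers agree on columns of clean vertices
  have hpow : ∀ v, Clean v → ∀ k u, (Λ ^ k) u v = (Λ' ^ k) u v := by
    intro v hv k
    induction k with
    | zero => intro u; simp
    | succ k ih =>
      intro u
      rw [pow_succ', pow_succ', Matrix.mul_apply, Matrix.mul_apply]
      apply Finset.sum_congr rfl
      intro w _
      by_cases hw : (Λ ^ k) w v = 0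
      · rw [hw, ← ih w, hw, mul_zero, mul_zero]
      · have hdw : descMat Λ w v := desc_of_pow_ne_zero k w v hw
        have huw : Λ' u w = Λ u w := by
          rw [hΛ']
          by_cases he : (u, w) ∈ E
          · exact absurd hdw (hv (u, w) he)
          · simp [he]
        rw [huw, ih w]
  -- inverses agree on columns of clean vertices
  have hinv : ∀ v, Clean v → ∀ u, (1 - Λ)⁻¹ u v = (1 - Λ')⁻¹ u v := by
    intro v hv u
    rw [inv_one_sub_eq_geom hΛm, inv_one_sub_eq_geom hΛ'm]
    simp only [Finset.sum_apply, Matrix.sum_apply]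
    exact Finset.sum_congr rfl fun k _ => hpow v hv k u
  -- implied covariances agree at clean pairs
  have hcov : ∀ a b, Clean a → Clean b → implCov Λ Ω a b = implCov Λ' Ω a b := by
    intro a b ha hb
    simp only [implCov, Matrix.mul_apply, Matrix.transpose_apply]
    apply Finset.sum_congr rfl
    intro v _
    rw [hinv b hb v]
    congr 1
    apply Finset.sum_congr rfl
    intro u _
    rw [hinv a ha u]
  have hcleanW : ∀ v : V, (v ∈ W ∨ v = x ∨ v = y) → Clean v := by
    intro v hv e he
    exact hdesc e he v hv
  have hx : Clean x := hcleanW x (Or.inr (Or.inl rfl))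
  have hy : Clean y := hcleanW y (Or.inr (Or.inr rfl))
  have hWc : ∀ w : V, w ∈ W → Clean w := fun w hw => hcleanW w (Or.inl hw)
  have hsub : subCov (implCov Λ Ω) W = subCov (implCov Λ' Ω) W := by
    ext a b
    exact hcov a.1 b.1 (hWc a.1 a.2) (hWc b.1 b.2)
  unfold partialCov
  rw [hcov x y hx hy, hsub]
  congr 1
  apply Finset.sum_congr rfl
  intro i _
  apply Finset.sum_congr rfl
  intro j _
  rw [hcov x i.1 hx (hWc i.1 i.2), hcov j.1 y (hWc j.1 j.2) hy]

end SEMPaper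
end

section
/- Conditional Edge Lemma 3: Let (Λ,Ω) be a linear SEM over V, let E be a set of directed edges, and let Λ' be Λ with the entries indexed by E set to zero. Define the partial error covariance σ(u_x,y|W) = C_{xy} − C_{xW}(Σ_{WW})⁻¹Σ_{Wy} with C = Ω(I−Λ)⁻¹ and Σ = Σ(Λ,Ω), and analogously for (Λ',Ω). If none of the vertices in W ∪ {y} is a descendant in the digraph of Λ of any head of an edge in E (x is allowed to be such a descendant), then σ(u_x,y|W) computed in (Λ,Ω) equals σ(u_x,y|W) computed in (Λ',Ω). -/
open scoped Classical Matrix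

namespace SEMPaper

variable {V : Type}

lemma pow_eq_zero_of_rank (Λ : Matrix V V ℝ) [Fintype V] [DecidableEq V]
    (r : V → ℕ) (hr : ∀ i j, Λ i j ≠ 0 → r i < r j) :
    Λ ^ (Finset.univ.sup r + 1) = 0 := by
  have key : ∀ k i j, (Λ ^ k) i j ≠ 0 → r i + k ≤ r j := by
    intro k
    induction k with
    | zero =>
      intro i j h
      rw [pow_zero, Matrix.one_apply] at h
      rcases eq_or_ne i j with rfl | hne
      · omega
      · simp [hne] at h
    | succ k ih =>
      intro i j h
      rw [pow_succ, Matrix.mul_apply] at h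
      obtain ⟨l, _, hl⟩ := Finset.exists_ne_zero_of_sum_ne_zero h
      have h1 := ih i l (left_ne_zero_of_mul hl)
      have h2 := hr l j (right_ne_zero_of_mul hl)
      omega
  ext i j
  by_contra h
  have h' : (Λ ^ (Finset.univ.sup r + 1)) i j ≠ 0 := by simpa using h
  have := key _ i j h'
  have : r j ≤ Finset.univ.sup r := Finset.le_sup (Finset.mem_univ j)
  omega

lemma inv_one_sub_eq (Λ : Matrix V V ℝ) [Fintype V] [DecidableEq V]
    (N : ℕ) (hN : Λ ^ N = 0) :
    (1 - Λ)⁻¹ = ∑ k ∈ Finset.range N, Λ ^ k := by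
  refine Matrix.inv_eq_left_inv ?_
  have h := geom_sum_mul Λ N
  rw [show (1 : Matrix V V ℝ) - Λ = -(Λ - 1) from (neg_sub Λ 1).symm, mul_neg, h, hN]
  simp


/-- **Conditional Edge Lemma 3.** Deleting a set `E` of directed edges whose heads have no
descendants in `W ∪ {y}` (but possibly having `x` as a descendant) leaves the partial error
covariance `σ(u_x,y|W)` unchanged. -/
theorem conditional_edge_lemma_three [Fintype V] [DecidableEq V]
    (Λ Ω : Matrix V V ℝ) (hacyc : AcyclicMat Λ) (hΩ : Ω.PosDef)
    (E : Set (V × V)) (hE : ∀ e ∈ E, Λ e.1 e.2 ≠ 0)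
    (Λ' : Matrix V V ℝ) (hΛ' : ∀ i j, Λ' i j = if (i, j) ∈ E then 0 else Λ i j)
    (x y : V) (W : Finset V)
    (hdesc : ∀ e ∈ E, ∀ v : V, (v ∈ W ∨ v = y) → ¬ descMat Λ e.2 v) :
    partialErrCov Λ Ω x y W = partialErrCov Λ' Ω x y W := by
  classical
  obtain ⟨r, -, hr⟩ := hacyc
  set N := Finset.univ.sup r + 1 with hNdef
  have hr' : ∀ i j, Λ' i j ≠ 0 → r i < r j := by
    intro i j h
    rw [hΛ' i j] at h
    split at h
    · exact absurd rfl h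
    · exact hr i j h
  have hΛN : Λ ^ N = 0 := pow_eq_zero_of_rank Λ r hr
  have hΛ'N : Λ' ^ N = 0 := pow_eq_zero_of_rank Λ' r hr'
  have key : ∀ k j, (∀ e ∈ E, ¬ descMat Λ e.2 j) → ∀ i, (Λ ^ k) i j = (Λ' ^ k) i j := by
    intro k
    induction k with
    | zero => intro j _ i; simp
    | succ k ih =>
      intro j hj i
      rw [pow_succ, pow_succ, Matrix.mul_apply, Matrix.mul_apply]
      refine Finset.sum_congr rfl fun l _ => ?_
      by_cases hl : Λ l j = 0
      · have h0 : Λ' l j = 0 := by rw [hΛ' l j]; split <;> simp [hl]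
        rw [hl, h0, mul_zero, mul_zero]
      · have hlE : (l, j) ∉ E := fun hmem =>
          hj (l, j) hmem Relation.ReflTransGen.refl
        have h1 : Λ' l j = Λ l j := by rw [hΛ' l j, if_neg hlE]
        have hPl : ∀ e ∈ E, ¬ descMat Λ e.2 l := fun e he hd =>
          hj e he (Relation.ReflTransGen.tail hd hl)
        rw [ih l hPl i, h1]
  have col : ∀ j, (∀ e ∈ E, ¬ descMat Λ e.2 j) →
      ∀ i, (1 - Λ)⁻¹ i j = (1 - Λ')⁻¹ i j := by
    intro j hj i
    rw [inv_one_sub_eq Λ N hΛN, inv_one_sub_eq Λ' N hΛ'N]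
    simp only [Matrix.sum_apply]
    exact Finset.sum_congr rfl fun k _ => key k j hj i
  have Pgood : ∀ v : V, (v ∈ W ∨ v = y) → ∀ e ∈ E, ¬ descMat Λ e.2 v :=
    fun v hv e he => hdesc e he v hv
  have hC : ∀ j, (∀ e ∈ E, ¬ descMat Λ e.2 j) →
      (Ω * (1 - Λ)⁻¹) x j = (Ω * (1 - Λ')⁻¹) x j := by
    intro j hj
    rw [Matrix.mul_apply, Matrix.mul_apply]
    exact Finset.sum_congr rfl fun k _ => by rw [col j hj k]
  have hSig : ∀ a b, (∀ e ∈ E, ¬ descMat Λ e.2 a) → (∀ e ∈ E, ¬ descMat Λ e.2 b) →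
      implCov Λ Ω a b = implCov Λ' Ω a b := by
    intro a b ha hb
    simp only [implCov, Matrix.mul_apply, Matrix.transpose_apply]
    refine Finset.sum_congr rfl fun l _ => ?_
    rw [col b hb l]
    congr 1
    exact Finset.sum_congr rfl fun k _ => by rw [col a ha k]
  have hsub : subCov (implCov Λ Ω) W = subCov (implCov Λ' Ω) W := by
    ext a b
    exact hSig a.1 b.1 (Pgood a.1 (Or.inl a.2)) (Pgood b.1 (Or.inl b.2))
  unfold partialErrCov
  rw [hC y (Pgood y (Or.inr rfl)), hsub]
  congr 1
  refine Finset.sum_congr rfl fun i _ => Finset.sum_congr rfl fun j _ => ?_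
  rw [hC i.1 (Pgood i.1 (Or.inl i.2)),
    hSig j.1 y (Pgood j.1 (Or.inl j.2)) (Pgood y (Or.inr rfl))]

end SEMPaper
end

section
/- Covariance identity for auxiliary variables (Theorem 1, algebraic part): Let (Λ,Ω) be a linear SEM over V, let z, y ∈ V and W ⊆ V, and let E be a set of directed edges all with head z. Define the auxiliary variable z* = z − Σ_{e∈E} Λ_{Ta(e)z}·Ta(e), whose partial covariance with y given W is σ(z*,y|W) = σ(z,y|W) − Σ_{e∈E} Λ_{Ta(e)z}·σ(Ta(e),y|W), all computed from Σ(Λ,Ω). Let Λ' be Λ with the entries of E set to zero. If no vertex of W ∪ {y} is a descendant of z in the digraph of Λ, then σ(z*,y|W) computed from Σ(Λ,Ω) equals σ(z,y|W) computed from Σ(Λ',Ω). -/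
open scoped Classical Matrix

namespace SEMPaper

variable {V : Type}

/-!
With `B' = (1 - Λ')⁻¹`, the two implied covariances are congruent: `Σ(Λ',Ω) = Mᵀ Σ(Λ,Ω) M` for
`M = (1 - Λ) B' = 1 - (Λ - Λ') B'`. As `Λ - Λ'` is supported on column `z`, column `v` of `M` is
`e_v - (Λ - Λ') e_z · B'_{zv}`. Acyclicity makes `B'_{zz} = 1` and `B'_{zv} = 0` unless `v`
descends from `z`, so `M` fixes the columns indexed by `W ∪ {y}` and sends `e_z` to
`e_z - ∑_{e ∈ E} Λ_{Ta(e) z} e_{Ta(e)}`, the coefficient vector of `z*`. A congruence fixing the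
conditioning set and `y` acts on `σ(·, y | W)` linearly through the first argument.
-/

theorem AcyclicMat.mono {Λ Λ' : Matrix V V ℝ} (h : AcyclicMat Λ)
    (hΛ' : ∀ i j, Λ' i j ≠ 0 → Λ i j ≠ 0) : AcyclicMat Λ' :=
  let ⟨r, hinj, hr⟩ := h
  ⟨r, hinj, fun i j hij => hr i j (hΛ' i j hij)⟩

theorem descMat.mono {Λ Λ' : Matrix V V ℝ} (hΛ' : ∀ i j, Λ' i j ≠ 0 → Λ i j ≠ 0) {u v : V}
    (h : descMat Λ' u v) : descMat Λ u v :=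
  Relation.ReflTransGen.mono hΛ' _ _ h

section Acyclic

variable [Fintype V] [DecidableEq V] {Λ : Matrix V V ℝ}

theorem descMat_and_le_of_pow_apply_ne_zero {r : V → ℕ} (hr : ∀ i j, Λ i j ≠ 0 → r i < r j) :
    ∀ {k : ℕ} {u v : V}, (Λ ^ k) u v ≠ 0 → descMat Λ u v ∧ r u + k ≤ r v
  | 0, u, v, h => by
    obtain rfl : u = v := by
      by_contra huv
      simp [Matrix.one_apply_ne huv] at h
    exact ⟨.refl, le_rfl⟩
  | k + 1, u, v, h => by
    rw [pow_succ, Matrix.mul_apply] at h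
    obtain ⟨m, -, hm⟩ := Finset.exists_ne_zero_of_sum_ne_zero h
    have hmv : Λ m v ≠ 0 := right_ne_zero_of_mul hm
    obtain ⟨hum, hlen⟩ := descMat_and_le_of_pow_apply_ne_zero hr (left_ne_zero_of_mul hm)
    exact ⟨hum.tail hmv, by have := hr m v hmv; omega⟩

theorem AcyclicMat.isNilpotent (h : AcyclicMat Λ) : IsNilpotent Λ := by
  obtain ⟨r, -, hr⟩ := h
  refine ⟨Finset.univ.sup r + 1, Matrix.ext fun u v => by_contra fun huv => ?_⟩
  have hlen := (descMat_and_le_of_pow_apply_ne_zero hr huv).2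
  have hv : r v ≤ Finset.univ.sup r := Finset.le_sup (Finset.mem_univ v)
  omega

theorem inv_one_sub_eq_geom_sum {n : ℕ} (hn : Λ ^ n = 0) :
    (1 - Λ)⁻¹ = ∑ k ∈ Finset.range n, Λ ^ k :=
  Matrix.inv_eq_right_inv (by rw [mul_neg_geom_sum, hn, sub_zero])

theorem AcyclicMat.isUnit_det_one_sub (h : AcyclicMat Λ) : IsUnit (1 - Λ).det :=
  (Matrix.isUnit_iff_isUnit_det _).1 h.isNilpotent.isUnit_one_sub

theorem AcyclicMat.descMat_of_inv_one_sub_apply_ne_zero (h : AcyclicMat Λ) {u v : V}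
    (huv : (1 - Λ)⁻¹ u v ≠ 0) : descMat Λ u v := by
  obtain ⟨n, hn⟩ := h.isNilpotent
  obtain ⟨r, -, hr⟩ := h
  rw [inv_one_sub_eq_geom_sum hn, Matrix.sum_apply] at huv
  obtain ⟨k, -, hk⟩ := Finset.exists_ne_zero_of_sum_ne_zero huv
  exact (descMat_and_le_of_pow_apply_ne_zero hr hk).1

theorem AcyclicMat.inv_one_sub_apply_self (h : AcyclicMat Λ) (v : V) : (1 - Λ)⁻¹ v v = 1 := by
  obtain ⟨n, hn⟩ := h.isNilpotent
  obtain ⟨r, -, hr⟩ := h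
  have hpos : 0 < n := Nat.pos_of_ne_zero fun h0 => by simpa [h0] using congrFun₂ hn v v
  rw [inv_one_sub_eq_geom_sum hn, Matrix.sum_apply,
    Finset.sum_eq_single_of_mem 0 (Finset.mem_range.2 hpos)]
  · simp
  · intro k _ hk
    by_contra hvv
    have := (descMat_and_le_of_pow_apply_ne_zero hr hvv).2
    omega

end Acyclic

section Congruence

variable [Fintype V] [DecidableEq V]

theorem partialCov_transpose_mul_mul (S M : Matrix V V ℝ) (x y : V) (W : Finset V)
    (hM : ∀ v, (v ∈ W ∨ v = y) → ∀ w, M w v = (1 : Matrix V V ℝ) w v) :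
    partialCov (Mᵀ * S * M) x y W = ∑ u, M u x * partialCov S u y W := by
  have hcol : ∀ u v, (v ∈ W ∨ v = y) → (Mᵀ * S * M) u v = ∑ w, M w u * S w v := by
    intro u v hv
    simp [Matrix.mul_apply, hM v hv, Matrix.one_apply]
  have hfix : ∀ u v, (u ∈ W ∨ u = y) → (v ∈ W ∨ v = y) → (Mᵀ * S * M) u v = S u v := by
    intro u v hu hv
    simp [hcol u v hv, hM u hu, Matrix.one_apply]
  have hsub : subCov (Mᵀ * S * M) W = subCov S W :=
    Matrix.ext fun i j => hfix _ _ (.inl i.2) (.inl j.2)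
  have hrow : ∀ i : W, (Mᵀ * S * M) x i = ∑ w, M w x * S w i := fun i => hcol x i (.inl i.2)
  have hcolW : ∀ j : W, (Mᵀ * S * M) j y = S j y := fun j => hfix _ _ (.inl j.2) (.inr rfl)
  simp only [partialCov, hsub, hcol x y (.inr rfl), hrow, hcolW, mul_sub, Finset.sum_sub_distrib,
    Finset.sum_mul, Finset.mul_sum]
  congr 1
  refine (Finset.sum_congr rfl fun j _ => Finset.sum_comm).trans ?_
  rw [Finset.sum_comm]
  simp only [mul_assoc]

theorem implCov_eq_transpose_mul_mul {Λ : Matrix V V ℝ} (hΛ : IsUnit (1 - Λ).det)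
    (Λ' Ω : Matrix V V ℝ) :
    implCov Λ' Ω = ((1 - Λ) * (1 - Λ')⁻¹)ᵀ * implCov Λ Ω * ((1 - Λ) * (1 - Λ')⁻¹) := by
  have hcancel : (1 - Λ)⁻¹ * (1 - Λ) = 1 := Matrix.nonsing_inv_mul _ hΛ
  have hcancelT : (1 - Λ)ᵀ * ((1 - Λ)⁻¹)ᵀ = 1 := by
    rw [← Matrix.transpose_mul, hcancel, Matrix.transpose_one]
  simp only [implCov, Matrix.transpose_mul, Matrix.mul_assoc]
  rw [← Matrix.mul_assoc ((1 - Λ)ᵀ), hcancelT, Matrix.one_mul, ← Matrix.mul_assoc (1 - Λ)⁻¹,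
    hcancel, Matrix.one_mul]

theorem one_sub_mul_inv_one_sub {Λ' : Matrix V V ℝ} (hΛ' : IsUnit (1 - Λ').det)
    (Λ : Matrix V V ℝ) :
    (1 - Λ) * (1 - Λ')⁻¹ = 1 - (Λ - Λ') * (1 - Λ')⁻¹ := by
  rw [show 1 - Λ = (1 - Λ') - (Λ - Λ') by abel, Matrix.sub_mul, Matrix.mul_nonsing_inv _ hΛ']

end Congruence

theorem sum_fst_eq_sum_ite_mem {α M : Type*} [Fintype α] [DecidableEq α] [AddCommMonoid M]
    {E : Finset (α × α)} {z : α} (hE : ∀ e ∈ E, e.2 = z) (f : α → M) :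
    ∑ e ∈ E, f e.1 = ∑ u, if (u, z) ∈ E then f u else 0 := by
  have hmk : ∀ e ∈ E, (e.1, z) = e := fun e he => by rw [← hE e he]
  rw [← Finset.sum_filter]
  exact Finset.sum_nbij' Prod.fst (fun u => (u, z))
    (fun e he => Finset.mem_filter.2 ⟨Finset.mem_univ _, (hmk e he).symm ▸ he⟩)
    (fun _ hu => (Finset.mem_filter.1 hu).2) hmk (fun _ _ => rfl) (fun _ _ => rfl)

theorem aux_var_covariance_general [Fintype V] [DecidableEq V]
    (Λ Ω : Matrix V V ℝ) (hacyc : AcyclicMat Λ)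
    (z y : V) (W : Finset V)
    (E : Finset (V × V)) (hE : ∀ e ∈ E, Λ e.1 e.2 ≠ 0 ∧ e.2 = z)
    (Λ' : Matrix V V ℝ) (hΛ' : ∀ i j, Λ' i j = if (i, j) ∈ E then 0 else Λ i j)
    (hdesc : ∀ v : V, (v ∈ W ∨ v = y) → ¬ descMat Λ z v) :
    partialCov (implCov Λ Ω) z y W
        - ∑ e ∈ E, Λ e.1 z * partialCov (implCov Λ Ω) e.1 y W
      = partialCov (implCov Λ' Ω) z y W := by
  have hsupp : ∀ i j, Λ' i j ≠ 0 → Λ i j ≠ 0 := fun i j h => by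
    rw [hΛ'] at h
    split_ifs at h
    exacts [absurd rfl h, h]
  have hacyc' : AcyclicMat Λ' := hacyc.mono hsupp
  set M := (1 - Λ) * (1 - Λ')⁻¹ with hMdef
  have hM : ∀ u v, M u v =
      (1 : Matrix V V ℝ) u v - (if (u, z) ∈ E then Λ u z else 0) * (1 - Λ')⁻¹ z v := by
    intro u v
    rw [hMdef, one_sub_mul_inv_one_sub hacyc'.isUnit_det_one_sub, Matrix.sub_apply,
      Matrix.mul_apply, Finset.sum_eq_single z]
    · rw [Matrix.sub_apply, hΛ']
      split_ifs <;> simp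
    · intro k _ hk
      have hnot : (u, k) ∉ E := fun h => hk (hE _ h).2
      simp [hΛ', hnot]
    · simp
  have hMfix : ∀ v, (v ∈ W ∨ v = y) → ∀ w, M w v = (1 : Matrix V V ℝ) w v := by
    intro v hv w
    have hzv : (1 - Λ')⁻¹ z v = 0 := by_contra fun h =>
      hdesc v hv ((hacyc'.descMat_of_inv_one_sub_apply_ne_zero h).mono hsupp)
    simp [hM, hzv]
  rw [implCov_eq_transpose_mul_mul hacyc.isUnit_det_one_sub Λ' Ω,
    partialCov_transpose_mul_mul _ _ _ _ _ hMfix,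
    sum_fst_eq_sum_ite_mem (fun e he => (hE e he).2) fun u => Λ u z * partialCov _ u y W]
  simp [hM, hacyc'.inv_one_sub_apply_self, sub_mul, Matrix.one_apply, ite_mul]

/-- **Theorem 1 (algebraic part).** For an auxiliary variable
`z* = z − ∑_{e ∈ E} Λ_{Ta(e) z} · Ta(e)` built from edges `E` with head `z`, if no vertex of
`W ∪ {y}` is a descendant of `z`, then `σ(z*,y|W)` computed in `(Λ,Ω)` equals `σ(z,y|W)`
computed in `(Λ',Ω)`, where `Λ'` is `Λ` with the entries of `E` set to zero. -/
theorem aux_var_covariance [Fintype V] [DecidableEq V]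
    (Λ Ω : Matrix V V ℝ) (hacyc : AcyclicMat Λ) (hΩ : Ω.PosDef)
    (z y : V) (W : Finset V)
    (E : Finset (V × V)) (hE : ∀ e ∈ E, Λ e.1 e.2 ≠ 0 ∧ e.2 = z)
    (Λ' : Matrix V V ℝ) (hΛ' : ∀ i j, Λ' i j = if (i, j) ∈ E then 0 else Λ i j)
    (hdesc : ∀ v : V, (v ∈ W ∨ v = y) → ¬ descMat Λ z v) :
    partialCov (implCov Λ Ω) z y W
        - ∑ e ∈ E, Λ e.1 z * partialCov (implCov Λ Ω) e.1 y W
      = partialCov (implCov Λ' Ω) z y W :=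
  aux_var_covariance_general Λ Ω hacyc z y W E hE Λ' hΛ' hdesc

end SEMPaper
end
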